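/- arXiv:1101.3287 — 4 statements merged into one kernel-verified Lean document; each statement's English description precedes it below -/
import Mathlib

section
/- For all real p > 0, (d/dp) ln r(p) = ∫_0^1 t^p/(1+t)^2 dt / p, where r(p) = Γ((p+1)/2)/(sqrt(p/2)·Γ(p/2)). Equivalently, (1/2)[ψ((p+1)/2) − ψ(p/2)] − 1/(2p) = (1/p)∫_0^1 t^p/(1+t)^2 dt. -/
/-!
Both `(ψ((p+1)/2) - ψ(p/2))/2` and Nielsen's `β(p) = ∫₀¹ t^(p-1)/(1+t) dt` satisfy
`f(p+2) = f(p) + 1/(p+1) - 1/p` and lie in `[0, 1/p]` (for the digamma side because `ψ` is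
increasing, `log Γ` being convex). So their difference is 2-periodic on `(0, ∞)` and tends to
`0`, hence vanishes. Integrating `d/dt (t^p/(1+t))` over `[0,1]` gives
`∫₀¹ t^p/(1+t)² dt = p β(p) - 1/2`, and `log r(p) = log Γ((p+1)/2) - log Γ(p/2) - log(p/2)/2`
is differentiated termwise.
-/

noncomputable def r (p : ℝ) : ℝ :=
  Real.Gamma ((p + 1) / 2) / (Real.sqrt (p / 2) * Real.Gamma (p / 2))

noncomputable def psi (x : ℝ) : ℝ := deriv Real.Gamma x / Real.Gamma x

open Real Set Filter Topology intervalIntegral MeasureTheory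

lemma differentiableAt_Gamma_of_pos {x : ℝ} (hx : 0 < x) : DifferentiableAt ℝ Gamma x :=
  differentiableAt_Gamma fun m => by linarith [(Nat.cast_nonneg m : (0 : ℝ) ≤ m)]

lemma hasDerivAt_log_Gamma {x : ℝ} (hx : 0 < x) :
    HasDerivAt (fun y => log (Gamma y)) (psi x) x :=
  (differentiableAt_Gamma_of_pos hx).hasDerivAt.log (Gamma_pos_of_pos hx).ne'

lemma psi_monotoneOn : MonotoneOn psi (Ioi 0) := by
  have h := convexOn_log_Gamma.monotoneOn_deriv fun x (hx : 0 < x) =>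
    (differentiableAt_Gamma_of_pos hx).log (Gamma_pos_of_pos hx).ne'
  intro x hx y hy hxy
  simpa only [Function.comp_def, (hasDerivAt_log_Gamma hx).deriv,
    (hasDerivAt_log_Gamma hy).deriv] using h hx hy hxy

lemma psi_add_one {x : ℝ} (hx : 0 < x) : psi (x + 1) = psi x + x⁻¹ := by
  have hshift : HasDerivAt (fun y => log (Gamma (y + 1))) (psi (x + 1)) x := by
    simpa using (hasDerivAt_log_Gamma (by linarith : 0 < x + 1)).comp_add_const x 1
  have hsum : HasDerivAt (fun y => log (Gamma y) + log y) (psi x + x⁻¹) x :=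
    (hasDerivAt_log_Gamma hx).add (hasDerivAt_log hx.ne')
  have hfun : (fun y => log (Gamma (y + 1))) =ᶠ[𝓝 x] fun y => log (Gamma y) + log y := by
    filter_upwards [eventually_gt_nhds hx] with y hy
    rw [Gamma_add_one hy.ne', log_mul hy.ne' (Gamma_pos_of_pos hy).ne', add_comm]
  exact hshift.unique (hsum.congr_of_eventuallyEq hfun)

noncomputable def psiGap (p : ℝ) : ℝ := (psi ((p + 1) / 2) - psi (p / 2)) / 2

lemma psiGap_nonneg {p : ℝ} (hp : 0 < p) : 0 ≤ psiGap p := by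
  have := psi_monotoneOn (mem_Ioi.2 (half_pos hp))
    (mem_Ioi.2 (by linarith : (0 : ℝ) < (p + 1) / 2)) (by linarith)
  unfold psiGap
  linarith

lemma psiGap_le_inv {p : ℝ} (hp : 0 < p) : psiGap p ≤ p⁻¹ := by
  have hmono := psi_monotoneOn (mem_Ioi.2 (by linarith : (0 : ℝ) < (p + 1) / 2))
    (mem_Ioi.2 (by linarith : (0 : ℝ) < p / 2 + 1)) (by linarith)
  rw [psi_add_one (half_pos hp), inv_div, div_eq_mul_inv 2 p] at hmono
  unfold psiGap
  linarith

lemma psiGap_add_two {p : ℝ} (hp : 0 < p) : psiGap (p + 2) = psiGap p + ((p + 1)⁻¹ - p⁻¹) := by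
  have h₁ := psi_add_one (by linarith : (0 : ℝ) < (p + 1) / 2)
  have h₂ := psi_add_one (half_pos hp)
  rw [show (p + 1) / 2 + 1 = (p + 2 + 1) / 2 by ring] at h₁
  rw [show p / 2 + 1 = (p + 2) / 2 by ring] at h₂
  unfold psiGap
  rw [h₁, h₂, inv_div, inv_div]
  field_simp
  ring

lemma intervalIntegrable_rpow_div_one_add_pow {q : ℝ} (hq : -1 < q) (n : ℕ) :
    IntervalIntegrable (fun t : ℝ => t ^ q / (1 + t) ^ n) volume 0 1 := by
  have hcont : ContinuousOn (fun t : ℝ => ((1 + t) ^ n)⁻¹) (uIcc 0 1) := by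
    refine ContinuousOn.inv₀ (by fun_prop) fun t ht => ?_
    have : 0 ≤ t := (uIcc_of_le (zero_le_one : (0 : ℝ) ≤ 1) ▸ ht).1
    positivity
  simpa only [div_eq_mul_inv] using (intervalIntegrable_rpow' hq).mul_continuousOn hcont

lemma integral_rpow_zero_one {q : ℝ} (hq : -1 < q) : ∫ t in (0 : ℝ)..1, t ^ q = (q + 1)⁻¹ := by
  rw [integral_rpow (Or.inl hq), zero_rpow (by linarith), one_rpow, sub_zero, one_div]

noncomputable def nielsenBeta (p : ℝ) : ℝ := ∫ t in (0 : ℝ)..1, t ^ (p - 1) / (1 + t)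

lemma intervalIntegrable_nielsenBeta_integrand {p : ℝ} (hp : 0 < p) :
    IntervalIntegrable (fun t : ℝ => t ^ (p - 1) / (1 + t)) volume 0 1 := by
  simpa only [pow_one] using intervalIntegrable_rpow_div_one_add_pow (by linarith : -1 < p - 1) 1

lemma nielsenBeta_nonneg (p : ℝ) : 0 ≤ nielsenBeta p :=
  integral_nonneg zero_le_one fun t ht => by
    have : 0 ≤ t := ht.1
    positivity

lemma nielsenBeta_le_inv {p : ℝ} (hp : 0 < p) : nielsenBeta p ≤ p⁻¹ := by
  calc nielsenBeta p ≤ ∫ t in (0 : ℝ)..1, t ^ (p - 1) := by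
        refine integral_mono_on zero_le_one (intervalIntegrable_nielsenBeta_integrand hp)
          (intervalIntegrable_rpow' (by linarith)) fun t ht => ?_
        exact div_le_self (rpow_nonneg ht.1 _) (by linarith [ht.1])
    _ = p⁻¹ := by rw [integral_rpow_zero_one (by linarith), sub_add_cancel]

lemma nielsenBeta_add_two {p : ℝ} (hp : 0 < p) :
    nielsenBeta (p + 2) = nielsenBeta p + ((p + 1)⁻¹ - p⁻¹) := by
  -- `t^(p+1) = t^(p-1) + (t^p - t^(p-1)) (1 + t)`
  have hsplit : EqOn (fun t : ℝ => t ^ (p + 2 - 1) / (1 + t))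
      (fun t => t ^ (p - 1) / (1 + t) + (t ^ p - t ^ (p - 1))) (uIcc 0 1) := by
    intro t ht
    rcases (uIcc_of_le (zero_le_one : (0 : ℝ) ≤ 1) ▸ ht).1.eq_or_lt with rfl | ht₀
    · simp [zero_rpow (by linarith : p + 2 - 1 ≠ 0), zero_rpow hp.ne']
    · have h₁ : t ^ (p + 2 - 1) = t ^ (p - 1) * t ^ 2 := by
        rw [← rpow_two, ← rpow_add ht₀]
        ring_nf
      have h₂ : t ^ p = t ^ (p - 1) * t := by
        rw [← rpow_add_one ht₀.ne', sub_add_cancel]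
      simp only [h₁, h₂]
      field_simp
      ring
  have hpow : ∀ q : ℝ, -1 < q → IntervalIntegrable (fun t : ℝ => t ^ q) volume 0 1 :=
    fun q hq => intervalIntegrable_rpow' hq
  rw [nielsenBeta, integral_congr hsplit,
    integral_add (intervalIntegrable_nielsenBeta_integrand hp)
      ((hpow p (by linarith)).sub (hpow (p - 1) (by linarith))),
    integral_sub (hpow p (by linarith)) (hpow (p - 1) (by linarith)),
    integral_rpow_zero_one (by linarith), integral_rpow_zero_one (by linarith), sub_add_cancel,
    nielsenBeta]

lemma eq_zero_of_add_eq_of_tendsto {h : ℝ → ℝ} {a : ℝ} (ha : 0 < a)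
    (hper : ∀ x, 0 < x → h (x + a) = h x) (hlim : Tendsto h atTop (𝓝 0)) {x : ℝ} (hx : 0 < x) :
    h x = 0 := by
  have hiter : ∀ n : ℕ, h (x + n * a) = h x := by
    intro n
    induction n with
    | zero => simp
    | succ n ih =>
      rw [Nat.cast_succ, add_one_mul, ← add_assoc, hper _ (by positivity), ih]
  have hseq : Tendsto (fun n : ℕ => x + n * a) atTop atTop :=
    tendsto_atTop_add_const_left _ x (tendsto_natCast_atTop_atTop.atTop_mul_const ha)
  exact tendsto_nhds_unique tendsto_const_nhds ((hlim.comp hseq).congr hiter)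

lemma psiGap_eq_nielsenBeta {p : ℝ} (hp : 0 < p) : psiGap p = nielsenBeta p := by
  have hper : ∀ x, 0 < x → (psiGap - nielsenBeta) (x + 2) = (psiGap - nielsenBeta) x := by
    intro x hx
    simp only [Pi.sub_apply, psiGap_add_two hx, nielsenBeta_add_two hx]
    ring
  have hbound : ∀ᶠ x in atTop, ‖(psiGap - nielsenBeta) x‖ ≤ x⁻¹ := by
    filter_upwards [eventually_gt_atTop 0] with x hx
    rw [Real.norm_eq_abs, Pi.sub_apply, abs_sub_le_iff]
    constructor <;> linarith [psiGap_nonneg hx, psiGap_le_inv hx, nielsenBeta_nonneg x,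
      nielsenBeta_le_inv hx]
  exact sub_eq_zero.1 <|
    eq_zero_of_add_eq_of_tendsto two_pos hper (squeeze_zero_norm' hbound tendsto_inv_atTop_zero) hp

lemma integral_rpow_div_one_add_sq {p : ℝ} (hp : 0 < p) :
    ∫ t in (0 : ℝ)..1, t ^ p / (1 + t) ^ 2 = p * nielsenBeta p - 1 / 2 := by
  have hcont : ContinuousOn (fun t : ℝ => t ^ p / (1 + t)) (Icc 0 1) :=
    ((continuous_rpow_const hp.le).continuousOn.div (by fun_prop)) fun t ht => by
      have : 0 ≤ t := ht.1
      positivity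
  have hderiv : ∀ t ∈ Ioo (0 : ℝ) 1, HasDerivAt (fun t : ℝ => t ^ p / (1 + t))
      (p * (t ^ (p - 1) / (1 + t)) - t ^ p / (1 + t) ^ 2) t := by
    intro t ht
    have h₁ : (0 : ℝ) < 1 + t := by linarith [ht.1]
    refine ((hasDerivAt_rpow_const (p := p) (Or.inl ht.1.ne')).div
      ((hasDerivAt_id' t).const_add 1) h₁.ne').congr_deriv ?_
    field_simp
  have hint_beta := (intervalIntegrable_nielsenBeta_integrand hp).const_mul p
  have hint_sq := intervalIntegrable_rpow_div_one_add_pow (by linarith : -1 < p) 2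
  have hftc := integral_eq_sub_of_hasDerivAt_of_le zero_le_one hcont hderiv (hint_beta.sub hint_sq)
  rw [integral_sub hint_beta hint_sq, intervalIntegral.integral_const_mul, one_rpow,
    zero_rpow hp.ne'] at hftc
  rw [nielsenBeta]
  linarith

lemma hasDerivAt_log_r {p : ℝ} (hp : 0 < p) :
    HasDerivAt (fun q => log (r q)) (psiGap p - (2 * p)⁻¹) p := by
  have hΓ₁ := (hasDerivAt_log_Gamma (by positivity : 0 < (p + 1) / 2)).comp p
    (((hasDerivAt_id' p).add_const 1).div_const 2)
  have hΓ₂ := (hasDerivAt_log_Gamma (half_pos hp)).comp p ((hasDerivAt_id' p).div_const 2)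
  have hsqrt : HasDerivAt (fun q => log (q / 2) / 2) ((2 * p)⁻¹) p := by
    refine (((hasDerivAt_log (half_pos hp).ne').comp p ((hasDerivAt_id' p).div_const 2)).div_const
      2).congr_deriv ?_
    field_simp
  have hfun : (fun q => log (r q)) =ᶠ[𝓝 p]
      fun q => log (Gamma ((q + 1) / 2)) - log (Gamma (q / 2)) - log (q / 2) / 2 := by
    filter_upwards [eventually_gt_nhds hp] with q hq
    have hΓ₁ := Gamma_pos_of_pos (by linarith : 0 < (q + 1) / 2)
    have hΓ₂ := Gamma_pos_of_pos (half_pos hq)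
    have hs := sqrt_pos.2 (half_pos hq)
    rw [r, log_div hΓ₁.ne' (by positivity), log_mul hs.ne' hΓ₂.ne', log_sqrt (half_pos hq).le]
    ring
  refine (((hΓ₁.sub hΓ₂).sub hsqrt).congr_of_eventuallyEq hfun).congr_deriv ?_
  rw [psiGap]
  ring

theorem deriv_log_r_eq (p : ℝ) (hp : 0 < p) :
    deriv (fun q => Real.log (r q)) p = (∫ t in (0:ℝ)..1, t ^ p / (1 + t) ^ 2) / p ∧
    (1 / 2) * (psi ((p + 1) / 2) - psi (p / 2)) - 1 / (2 * p) =
      (1 / p) * ∫ t in (0:ℝ)..1, t ^ p / (1 + t) ^ 2 := by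
  have hJ : (∫ t in (0 : ℝ)..1, t ^ p / (1 + t) ^ 2) / p = psiGap p - (2 * p)⁻¹ := by
    rw [integral_rpow_div_one_add_sq hp, ← psiGap_eq_nielsenBeta hp]
    field_simp
  refine ⟨(hasDerivAt_log_r hp).deriv.trans hJ.symm, ?_⟩
  rw [one_div_mul_eq_div p, hJ, psiGap]
  ring
end

section
/- For every real p > 0 and natural k ≥ 0, with ℓ_k(p) := Σ_{m=1}^{k} 2^{-1-m}·m!/p^{(m+1)}, one has 0 < (d/dp) ln r(p) − ℓ_k(p) < 2^{-k-1}·(k+1)!/p^{(k+2)} < 2^{-k-1}/p. -/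
noncomputable def ell (k : ℕ) (p : ℝ) : ℝ :=
  ∑ m ∈ Finset.Icc 1 k, (1 / 2 ^ (m + 1)) * (m.factorial : ℝ) /
    ∏ j ∈ Finset.range (m + 1), (p + j)

open Real Set Filter Topology intervalIntegral

namespace LogGammaRatio

noncomputable def unitMellin (g : ℝ → ℝ) (p : ℝ) : ℝ :=
  ∫ t in (0 : ℝ)..1, t ^ (p - 1) * g t

section unitMellin

variable {g h f : ℝ → ℝ} {p : ℝ}

lemma intervalIntegrable_rpow_mul (hp : 0 < p) (hg : ContinuousOn g (Icc 0 1)) :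
    IntervalIntegrable (fun t => t ^ (p - 1) * g t) MeasureTheory.volume 0 1 :=
  (intervalIntegrable_rpow' (by linarith)).mul_continuousOn (by rwa [uIcc_of_le zero_le_one])

lemma unitMellin_one (hp : 0 < p) : unitMellin (fun _ => 1) p = 1 / p := by
  simp only [unitMellin, mul_one]
  rw [integral_rpow (Or.inl (by linarith)), sub_add_cancel, one_rpow, zero_rpow hp.ne']
  ring

lemma unitMellin_const_mul (c : ℝ) : unitMellin (fun t => c * g t) p = c * unitMellin g p := by
  simp only [unitMellin, mul_left_comm _ c, integral_const_mul]

lemma unitMellin_add_one (hp : 0 < p) : unitMellin g (p + 1) = unitMellin (fun t => t * g t) p := by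
  refine integral_congr fun t ht => ?_
  rw [uIcc_of_le zero_le_one] at ht
  rcases ht.1.eq_or_lt with rfl | ht0
  · simp [zero_rpow hp.ne']
  · simp only [add_sub_cancel_right, ← mul_assoc, ← rpow_add_one ht0.ne', sub_add_cancel]

lemma unitMellin_add_eq (hp : 0 < p) (hg : ContinuousOn g (Icc 0 1))
    (hh : ContinuousOn h (Icc 0 1)) (hf : ∀ t ∈ Icc (0 : ℝ) 1, g t + h t = f t) :
    unitMellin g p + unitMellin h p = unitMellin f p := by
  rw [unitMellin, unitMellin, ← integral_add (intervalIntegrable_rpow_mul hp hg)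
    (intervalIntegrable_rpow_mul hp hh)]
  refine integral_congr fun t ht => ?_
  rw [uIcc_of_le zero_le_one] at ht
  simp only [← mul_add, hf t ht]

lemma unitMellin_lt_unitMellin (hp : 0 < p) (hg : ContinuousOn g (Icc 0 1))
    (hh : ContinuousOn h (Icc 0 1)) (hlt : ∀ t ∈ Ioo (0 : ℝ) 1, g t < h t) :
    unitMellin g p < unitMellin h p := by
  rw [← sub_pos, unitMellin, unitMellin, ← integral_sub (intervalIntegrable_rpow_mul hp hh)
    (intervalIntegrable_rpow_mul hp hg)]
  refine intervalIntegral_pos_of_pos_on ((intervalIntegrable_rpow_mul hp hh).sub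
    (intervalIntegrable_rpow_mul hp hg)) (fun t ht => ?_) one_pos
  rw [← mul_sub]
  exact mul_pos (rpow_pos_of_pos ht.1 _) (sub_pos.2 (hlt t ht))

lemma unitMellin_pos (hp : 0 < p) (hg : ContinuousOn g (Icc 0 1))
    (hpos : ∀ t ∈ Ioo (0 : ℝ) 1, 0 < g t) : 0 < unitMellin g p := by
  simpa [unitMellin] using unitMellin_lt_unitMellin hp continuousOn_const hg hpos

end unitMellin

/-- `betaNat m p = B(p, m + 1)`; `betaNatDiv` carries the extra weight `1 / (1 + t)`. -/
noncomputable def betaNat (m : ℕ) : ℝ → ℝ := unitMellin fun t => (1 - t) ^ m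

noncomputable def betaNatDiv (m : ℕ) : ℝ → ℝ := unitMellin fun t => (1 - t) ^ m / (1 + t)

section beta

variable {p : ℝ}

lemma continuousOn_one_sub_pow_div (m : ℕ) :
    ContinuousOn (fun t : ℝ => (1 - t) ^ m / (1 + t)) (Icc 0 1) :=
  (by fun_prop : Continuous fun t : ℝ => (1 - t) ^ m).continuousOn.div (by fun_prop)
    fun t ht => by linarith [ht.1]

lemma betaNat_zero (hp : 0 < p) : betaNat 0 p = 1 / p := by
  simpa [betaNat] using unitMellin_one hp

lemma betaNat_succ_add_betaNat_add_one (hp : 0 < p) (m : ℕ) :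
    betaNat (m + 1) p + betaNat m (p + 1) = betaNat m p := by
  unfold betaNat
  rw [unitMellin_add_one hp]
  exact unitMellin_add_eq hp (by fun_prop) (by fun_prop) fun t _ => by ring

lemma betaNat_eq (m : ℕ) {p : ℝ} (hp : 0 < p) :
    betaNat m p = m.factorial / ∏ j ∈ Finset.range (m + 1), (p + j) := by
  induction m generalizing p with
  | zero => simp [betaNat_zero hp]
  | succ m ih =>
    set A := ∏ j ∈ Finset.range (m + 1), (p + j)
    set B := ∏ j ∈ Finset.range (m + 1), (p + 1 + j)
    have hA : 0 < A := Finset.prod_pos fun j _ => by positivity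
    have hB : 0 < B := Finset.prod_pos fun j _ => by positivity
    have hfirst : ∏ j ∈ Finset.range (m + 2), (p + j) = p * B := by
      rw [Finset.prod_range_succ', mul_comm]
      push_cast
      simp only [B, add_assoc, add_comm (1 : ℝ), add_zero]
    have hlast : ∏ j ∈ Finset.range (m + 2), (p + j) = A * (p + (m + 1)) := by
      rw [Finset.prod_range_succ]; push_cast; rfl
    rw [eq_sub_of_add_eq (betaNat_succ_add_betaNat_add_one hp m), ih hp, ih (by linarith),
      hfirst, div_sub_div _ _ hA.ne' hB.ne', div_eq_div_iff (by positivity) (by positivity),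
      Nat.factorial_succ]
    push_cast
    linear_combination (m.factorial * B) * (hfirst.symm.trans hlast)

lemma betaNat_succ_lt (hp : 0 < p) (m : ℕ) : betaNat (m + 1) p < 1 / p := by
  rw [← betaNat_zero hp]
  exact unitMellin_lt_unitMellin hp (by fun_prop) (by fun_prop) fun t ht =>
    by simpa using pow_lt_one₀ (by linarith [ht.2]) (by linarith [ht.1]) m.succ_ne_zero

lemma betaNatDiv_add_betaNatDiv_add_one (hp : 0 < p) (m : ℕ) :
    betaNatDiv m p + betaNatDiv m (p + 1) = betaNat m p := by
  unfold betaNatDiv betaNat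
  rw [unitMellin_add_one hp]
  refine unitMellin_add_eq hp (continuousOn_one_sub_pow_div m)
    (continuousOn_id.mul (continuousOn_one_sub_pow_div m)) fun t ht => ?_
  have : 1 + t ≠ 0 := by linarith [ht.1]
  field_simp

lemma two_mul_betaNatDiv (hp : 0 < p) (m : ℕ) :
    2 * betaNatDiv m p = betaNat m p + betaNatDiv (m + 1) p := by
  rw [betaNatDiv, ← unitMellin_const_mul]
  refine (unitMellin_add_eq hp (by fun_prop) (continuousOn_one_sub_pow_div (m + 1))
    fun t ht => ?_).symm
  have : 1 + t ≠ 0 := by linarith [ht.1]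
  field_simp
  ring

lemma betaNatDiv_pos (hp : 0 < p) (m : ℕ) : 0 < betaNatDiv m p :=
  unitMellin_pos hp (continuousOn_one_sub_pow_div m) fun t ht =>
    div_pos (pow_pos (by linarith [ht.2]) m) (by linarith [ht.1])

lemma betaNatDiv_lt_betaNat (hp : 0 < p) (m : ℕ) : betaNatDiv m p < betaNat m p :=
  unitMellin_lt_unitMellin hp (continuousOn_one_sub_pow_div m) (by fun_prop) fun t ht =>
    div_lt_self (pow_pos (by linarith [ht.2]) m) (by linarith [ht.1])

lemma betaNatDiv_one_div_two_eq (hp : 0 < p) (k : ℕ) :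
    betaNatDiv 1 p / 2 = ∑ m ∈ Finset.Icc 1 k, 1 / 2 ^ (m + 1) * betaNat m p
      + 1 / 2 ^ (k + 1) * betaNatDiv (k + 1) p := by
  induction k with
  | zero => simp [div_eq_inv_mul]
  | succ k ih =>
    rw [ih, Finset.sum_Icc_succ_top (by omega), ← sub_eq_zero]
    linear_combination (1 / 2 ^ (k + 2)) * two_mul_betaNatDiv hp (k + 1)

lemma tendsto_betaNatDiv_atTop (m : ℕ) : Tendsto (betaNatDiv m) atTop (𝓝 0) := by
  have hle : ∀ᶠ p in atTop, betaNatDiv m p ≤ 1 / p :=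
    (eventually_gt_atTop 0).mono fun p hp => (betaNatDiv_lt_betaNat hp m).le.trans <| by
      cases m with
      | zero => exact (betaNat_zero hp).le
      | succ m => exact (betaNat_succ_lt hp m).le
  exact tendsto_of_tendsto_of_tendsto_of_le_of_le' tendsto_const_nhds
    (tendsto_const_nhds.div_atTop tendsto_id)
    ((eventually_gt_atTop 0).mono fun p hp => (betaNatDiv_pos hp m).le) hle

end beta

lemma eq_zero_of_add_one_eq_neg_of_tendsto {f : ℝ → ℝ} (hf : ∀ x > 0, f (x + 1) = -f x)
    (hlim : Tendsto f atTop (𝓝 0)) {x : ℝ} (hx : 0 < x) : f x = 0 := by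
  have habs (n : ℕ) : |f (x + n)| = |f x| := by
    induction n with
    | zero => simp
    | succ n ih => rw [Nat.cast_succ, ← add_assoc, hf _ (by positivity), abs_neg, ih]
  have hseq : Tendsto (fun n : ℕ => |f (x + n)|) atTop (𝓝 0) := by
    simpa using (hlim.comp (tendsto_atTop_add_const_left _ x tendsto_natCast_atTop_atTop)).abs
  simp only [habs] at hseq
  exact abs_eq_zero.1 (tendsto_const_nhds_iff.1 hseq)

noncomputable def digamma (x : ℝ) : ℝ := deriv (log ∘ Gamma) x

section digamma

variable {x : ℝ}

lemma hasDerivAt_log_Gamma (hx : 0 < x) : HasDerivAt (log ∘ Gamma) (digamma x) x :=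
  ((differentiableAt_Gamma fun m => ((neg_nonpos.2 m.cast_nonneg).trans_lt hx).ne').log
    (Gamma_pos_of_pos hx).ne').hasDerivAt

lemma digamma_add_one (hx : 0 < x) : digamma (x + 1) = digamma x + x⁻¹ := by
  have hshift : HasDerivAt (fun y => log (Gamma (y + 1))) (digamma (x + 1)) x :=
    (hasDerivAt_log_Gamma (by linarith)).comp_add_const x 1
  have hrec : (fun y => log (Gamma (y + 1))) =ᶠ[𝓝 x] fun y => log (Gamma y) + log y := by
    filter_upwards [Ioi_mem_nhds hx] with y hy
    rw [Gamma_add_one hy.ne', log_mul hy.ne' (Gamma_pos_of_pos hy).ne', add_comm]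
  exact hshift.unique
    (((hasDerivAt_log_Gamma hx).add (hasDerivAt_log hx.ne')).congr_of_eventuallyEq hrec)

lemma digamma_monotoneOn : MonotoneOn digamma (Ioi 0) :=
  convexOn_log_Gamma.monotoneOn_deriv fun _ hx => (hasDerivAt_log_Gamma hx).differentiableAt

lemma digamma_add_half_sub_mem (hx : 0 < x) : digamma (x + 1 / 2) - digamma x ∈ Icc 0 x⁻¹ := by
  have hmono {a b : ℝ} (ha : 0 < a) (hab : a ≤ b) : digamma a ≤ digamma b :=
    digamma_monotoneOn (mem_Ioi.2 ha) (mem_Ioi.2 (ha.trans_le hab)) hab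
  have hup := hmono (by positivity : 0 < x + 1 / 2) (by linarith : x + 1 / 2 ≤ x + 1)
  rw [digamma_add_one hx] at hup
  exact ⟨sub_nonneg.2 (hmono hx (by linarith)), by linarith⟩

end digamma

section logR

variable {p : ℝ}

lemma log_r_eq (hp : 0 < p) :
    log (r p) = log (Gamma ((p + 1) / 2)) - log (Gamma (p / 2)) - log p / 2 + log 2 / 2 := by
  have hs : 0 < √(p / 2) := sqrt_pos.2 (by positivity)
  rw [r, log_div (Gamma_pos_of_pos (by positivity)).ne' (mul_pos hs (Gamma_pos_of_pos
    (by positivity))).ne', log_mul hs.ne' (Gamma_pos_of_pos (by positivity)).ne',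
    log_sqrt (by positivity), log_div hp.ne' two_ne_zero]
  ring

lemma deriv_log_r (hp : 0 < p) :
    deriv (fun q => log (r q)) p =
      (digamma ((p + 1) / 2) - digamma (p / 2)) / 2 - (2 * p)⁻¹ := by
  have hupper := (hasDerivAt_log_Gamma (by positivity : 0 < (p + 1) / 2)).comp p
    (((hasDerivAt_id p).add_const 1).div_const 2)
  have hlower := (hasDerivAt_log_Gamma (by positivity : 0 < p / 2)).comp p
    ((hasDerivAt_id p).div_const 2)
  have hsum : HasDerivAt (fun q => log (Gamma ((q + 1) / 2)) - log (Gamma (q / 2)) - log q / 2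
      + log 2 / 2) (digamma ((p + 1) / 2) * (1 / 2) - digamma (p / 2) * (1 / 2) - p⁻¹ / 2) p :=
    ((hupper.sub hlower).sub ((hasDerivAt_log hp.ne').div_const 2)).add_const (log 2 / 2)
  have hlog : (fun q => log (r q)) =ᶠ[𝓝 p] _ :=
    (eventually_gt_nhds hp).mono fun q hq => log_r_eq hq
  rw [hlog.deriv_eq, hsum.deriv, mul_inv]
  ring

lemma deriv_log_r_add_deriv_log_r_add_one (hp : 0 < p) :
    deriv (fun q => log (r q)) p + deriv (fun q => log (r q)) (p + 1) = betaNat 1 p / 2 := by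
  rw [deriv_log_r hp, deriv_log_r (by positivity), show (p + 1 + 1) / 2 = p / 2 + 1 by ring,
    digamma_add_one (by positivity), betaNat_eq 1 hp]
  norm_num [Finset.prod_range_succ]
  field_simp
  ring

lemma abs_deriv_log_r_le (hp : 0 < p) : |deriv (fun q => log (r q)) p| ≤ (2 * p)⁻¹ := by
  obtain ⟨hlo, hhi⟩ := digamma_add_half_sub_mem (by positivity : 0 < p / 2)
  rw [deriv_log_r hp, show (p + 1) / 2 = p / 2 + 1 / 2 by ring, abs_le]
  have hinv : (p / 2)⁻¹ = 4 * (2 * p)⁻¹ := by field_simp; norm_num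
  constructor <;> linarith

lemma tendsto_deriv_log_r_atTop : Tendsto (fun p => deriv (fun q => log (r q)) p) atTop (𝓝 0) :=
  squeeze_zero_norm' (a := fun p : ℝ => (2 * p)⁻¹)
    ((eventually_gt_atTop 0).mono fun _ hp => abs_deriv_log_r_le hp)
    (tendsto_inv_atTop_zero.comp (tendsto_id.const_mul_atTop two_pos))

lemma deriv_log_r_eq_betaNatDiv (hp : 0 < p) :
    deriv (fun q => log (r q)) p = betaNatDiv 1 p / 2 := by
  have hdiff := eq_zero_of_add_one_eq_neg_of_tendsto
    (f := fun q => deriv (fun q => log (r q)) q - betaNatDiv 1 q / 2)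
    (fun q hq => by
      linarith [deriv_log_r_add_deriv_log_r_add_one hq, betaNatDiv_add_betaNatDiv_add_one hq 1])
    (by simpa using tendsto_deriv_log_r_atTop.sub ((tendsto_betaNatDiv_atTop 1).div_const 2)) hp
  exact sub_eq_zero.1 hdiff

end logR

lemma ell_eq_sum_betaNat {p : ℝ} (hp : 0 < p) (k : ℕ) :
    ell k p = ∑ m ∈ Finset.Icc 1 k, 1 / 2 ^ (m + 1) * betaNat m p :=
  Finset.sum_congr rfl fun m _ => by rw [betaNat_eq m hp, mul_div_assoc]

end LogGammaRatio

open LogGammaRatio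

theorem deriv_log_r_sub_ell_bounds (p : ℝ) (hp : 0 < p) (k : ℕ) :
    0 < deriv (fun q => Real.log (r q)) p - ell k p ∧
    deriv (fun q => Real.log (r q)) p - ell k p <
      (1 / 2 ^ (k + 1)) * ((k + 1).factorial : ℝ) / ∏ j ∈ Finset.range (k + 2), (p + j) ∧
    (1 / 2 ^ (k + 1)) * ((k + 1).factorial : ℝ) / (∏ j ∈ Finset.range (k + 2), (p + j)) <
      (1 / 2 ^ (k + 1)) / p := by
  have hrem : deriv (fun q => Real.log (r q)) p - ell k p =
      1 / 2 ^ (k + 1) * betaNatDiv (k + 1) p := by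
    rw [deriv_log_r_eq_betaNatDiv hp, betaNatDiv_one_div_two_eq hp k, ell_eq_sum_betaNat hp k]
    ring
  have hbound : (1 / 2 ^ (k + 1)) * ((k + 1).factorial : ℝ) /
      ∏ j ∈ Finset.range (k + 2), (p + j) = 1 / 2 ^ (k + 1) * betaNat (k + 1) p := by
    rw [betaNat_eq (k + 1) hp, mul_div_assoc]
  have hc : (0 : ℝ) < 1 / 2 ^ (k + 1) := by positivity
  rw [hrem, hbound, div_eq_mul_one_div _ p]
  exact ⟨mul_pos hc (betaNatDiv_pos hp _), mul_lt_mul_of_pos_left (betaNatDiv_lt_betaNat hp _) hc,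
    mul_lt_mul_of_pos_left (betaNat_succ_lt hp k) hc⟩
end

section
/- For all real p > 0, r(p) ≤ U_1(p) := (p/(p+1))^{1/4}, i.e., Γ((p+1)/2)/Γ(p/2) ≤ sqrt(p/2)·(p/(p+1))^{1/4}. Moreover the inequality is strict. -/
open MeasureTheory Set Real

lemma aux_nonneg (x : ℝ) (hx : 0 < x) :
    0 ≤ x^2 * Real.Gamma x - 2*(Real.sqrt (4*x+1))*x * Real.Gamma (x+1/2)
      + (6*x+1) * Real.Gamma (x+1) - 2*(Real.sqrt (4*x+1)) * Real.Gamma (x+3/2)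
      + Real.Gamma (x+2) := by
  set c := Real.sqrt (4*x+1) with hcdef
  have hc2 : c^2 = 4*x+1 := Real.sq_sqrt (by linarith)
  have I1 := Real.GammaIntegral_convergent hx
  have I2 := Real.GammaIntegral_convergent (s := x + 1/2) (by linarith)
  have I3 := Real.GammaIntegral_convergent (s := x + 1) (by linarith)
  have I4 := Real.GammaIntegral_convergent (s := x + 3/2) (by linarith)
  have I5 := Real.GammaIntegral_convergent (s := x + 2) (by linarith)
  have h2 : (0:ℝ) < x + 1/2 := by linarith
  have h3 : (0:ℝ) < x + 1 := by linarith
  have h4 : (0:ℝ) < x + 3/2 := by linarith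
  have h5 : (0:ℝ) < x + 2 := by linarith
  have hInt1 : Integrable (fun t => x^2 * (rexp (-t) * t ^ (x-1))) (volume.restrict (Ioi 0)) := I1.const_mul _
  have hInt2 : Integrable (fun t => 2*c*x * (rexp (-t) * t ^ (x+1/2-1))) (volume.restrict (Ioi 0)) := I2.const_mul _
  have hInt3 : Integrable (fun t => (6*x+1) * (rexp (-t) * t ^ (x+1-1))) (volume.restrict (Ioi 0)) := I3.const_mul _
  have hInt4 : Integrable (fun t => 2*c * (rexp (-t) * t ^ (x+3/2-1))) (volume.restrict (Ioi 0)) := I4.const_mul _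
  have hInt5 : Integrable (fun t => rexp (-t) * t ^ (x+2-1)) (volume.restrict (Ioi 0)) := I5
  have hInt12 : Integrable (fun t => x^2 * (rexp (-t) * t ^ (x-1))
      - 2*c*x * (rexp (-t) * t ^ (x+1/2-1))) (volume.restrict (Ioi 0)) := hInt1.sub hInt2
  have hInt123 : Integrable (fun t => x^2 * (rexp (-t) * t ^ (x-1))
      - 2*c*x * (rexp (-t) * t ^ (x+1/2-1)) + (6*x+1) * (rexp (-t) * t ^ (x+1-1)))
      (volume.restrict (Ioi 0)) := hInt12.add hInt3
  have hInt1234 : Integrable (fun t => x^2 * (rexp (-t) * t ^ (x-1))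
      - 2*c*x * (rexp (-t) * t ^ (x+1/2-1)) + (6*x+1) * (rexp (-t) * t ^ (x+1-1))
      - 2*c * (rexp (-t) * t ^ (x+3/2-1))) (volume.restrict (Ioi 0)) := hInt123.sub hInt4
  have hsplit : (∫ t in Ioi 0, (x^2 * (rexp (-t) * t^(x-1)) - 2*c*x * (rexp (-t) * t^(x+1/2-1))
        + (6*x+1) * (rexp (-t) * t^(x+1-1)) - 2*c*(rexp (-t)*t^(x+3/2-1)) + rexp (-t)*t^(x+2-1)))
      = x^2 * Real.Gamma x - 2*c*x*Real.Gamma (x+1/2) + (6*x+1)*Real.Gamma (x+1)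
        - 2*c*Real.Gamma (x+3/2) + Real.Gamma (x+2) := by
    rw [integral_add hInt1234 hInt5, integral_sub hInt123 hInt4, integral_add hInt12 hInt3,
        integral_sub hInt1 hInt2,
        integral_const_mul, integral_const_mul, integral_const_mul, integral_const_mul,
        ← Real.Gamma_eq_integral hx, ← Real.Gamma_eq_integral h2,
        ← Real.Gamma_eq_integral h3, ← Real.Gamma_eq_integral h4,
        ← Real.Gamma_eq_integral h5]
  rw [← hsplit]
  apply setIntegral_nonneg measurableSet_Ioi
  intro t ht
  have ht : (0:ℝ) < t := ht
  set q : ℝ := t ^ ((1:ℝ)/2) with hqdef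
  have hq2 : q^2 = t := by
    rw [hqdef, ← Real.rpow_natCast (t ^ ((1:ℝ)/2)) 2, ← Real.rpow_mul ht.le]
    norm_num
  have d1 : t ^ (x + 1/2 - 1) = t^(x-1) * q := by
    rw [show x + 1/2 - 1 = (x-1) + 1/2 by ring, Real.rpow_add ht]
  have d2 : t ^ (x + 1 - 1) = t^(x-1) * q^2 := by
    rw [hq2, show x + 1 - 1 = (x-1) + 1 by ring, Real.rpow_add ht, Real.rpow_one]
  have d3 : t ^ (x + 3/2 - 1) = t^(x-1) * q^3 := by
    have hq3 : q^3 = t ^ ((3:ℝ)/2) := by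
      rw [hqdef, ← Real.rpow_natCast (t ^ ((1:ℝ)/2)) 3, ← Real.rpow_mul ht.le]
      norm_num
    rw [hq3, show x + 3/2 - 1 = (x-1) + 3/2 by ring, Real.rpow_add ht]
  have d4 : t ^ (x + 2 - 1) = t^(x-1) * q^4 := by
    have hq4 : q^4 = t ^ (2:ℝ) := by
      rw [hqdef, ← Real.rpow_natCast (t ^ ((1:ℝ)/2)) 4, ← Real.rpow_mul ht.le]
      norm_num
    rw [hq4, show x + 2 - 1 = (x-1) + 2 by ring, Real.rpow_add ht]
  have key : x ^ 2 * (rexp (-t) * t ^ (x - 1)) - 2 * c * x * (rexp (-t) * t ^ (x + 1/2 - 1)) +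
      (6 * x + 1) * (rexp (-t) * t ^ (x + 1 - 1)) - 2 * c * (rexp (-t) * t ^ (x + 3/2 - 1)) +
      rexp (-t) * t ^ (x + 2 - 1)
      = (rexp (-t) * t ^ (x-1)) * (c * q - (x + q^2))^2 := by
    rw [d1, d2, d3, d4]
    linear_combination (-(rexp (-t) * t ^ (x-1) * q^2)) * hc2
  rw [key]
  positivity

lemma key_ineq (x : ℝ) (hx : 0 < x) :
    Real.sqrt (4*x+1) * Real.Gamma (x + 1/2) ≤ 2 * x * Real.Gamma x := by
  have h := aux_nonneg x hx
  have g1 : Real.Gamma (x+1) = x * Real.Gamma x := Real.Gamma_add_one hx.ne'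
  have g2 : Real.Gamma (x+2) = (x+1) * Real.Gamma (x+1) := by
    rw [show x + 2 = (x+1) + 1 by ring, Real.Gamma_add_one (by linarith)]
  have g3 : Real.Gamma (x+3/2) = (x+1/2) * Real.Gamma (x+1/2) := by
    rw [show x + 3/2 = (x+1/2) + 1 by ring, Real.Gamma_add_one (by linarith)]
  rw [g1, g2, g3, g1] at h
  -- h : 0 ≤ (4x+1) * (2x Γx - c Γ(x+1/2))
  have h4 : (0:ℝ) < 4*x+1 := by linarith
  nlinarith [h, h4, mul_pos h4 hx]

theorem r_lt_U1 (p : ℝ) (hp : 0 < p) :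
    r p < (p / (p + 1)) ^ ((1 : ℝ) / 4) := by
  have hx : 0 < p / 2 := by linarith
  set x := p / 2 with hxdef
  have hΓ : 0 < Real.Gamma x := Real.Gamma_pos_of_pos hx
  have hc : 0 < Real.sqrt (4*x+1) := Real.sqrt_pos.mpr (by linarith)
  have hsx : 0 < Real.sqrt x := Real.sqrt_pos.mpr hx
  have hkey := key_ineq x hx
  have hΓ2 : 0 < Real.Gamma (x + 1/2) := Real.Gamma_pos_of_pos (by linarith)
  -- r p = Γ(x+1/2)/(√x Γ x)
  have hr : r p = Real.Gamma (x + 1/2) / (Real.sqrt x * Real.Gamma x) := by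
    rw [r, hxdef]
    norm_num
    ring_nf
  have hrle : r p ≤ 2 * Real.sqrt x / Real.sqrt (4*x+1) := by
    rw [hr, div_le_div_iff₀ (by positivity) hc]
    calc Real.Gamma (x+1/2) * Real.sqrt (4*x+1)
        ≤ (2 * x * Real.Gamma x) := by nlinarith [hkey]
      _ = 2 * Real.sqrt x * (Real.sqrt x * Real.Gamma x) := by
          rw [show 2 * Real.sqrt x * (Real.sqrt x * Real.Gamma x) = 2 * ((Real.sqrt x * Real.sqrt x) * Real.Gamma x) by ring, Real.mul_self_sqrt hx.le]
          ring
  have hlt : 2 * Real.sqrt x / Real.sqrt (4*x+1) < (p / (p+1)) ^ ((1:ℝ)/4) := by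
    have hL : 0 ≤ 2 * Real.sqrt x / Real.sqrt (4*x+1) := by positivity
    have hR : 0 < (p / (p+1)) ^ ((1:ℝ)/4) := by
      apply Real.rpow_pos_of_pos; positivity
    have hpow : (2 * Real.sqrt x / Real.sqrt (4*x+1))^(4:ℕ) < ((p / (p+1)) ^ ((1:ℝ)/4))^(4:ℕ) := by
      have e1 : ((p / (p+1)) ^ ((1:ℝ)/4))^(4:ℕ) = p / (p+1) := by
        rw [← Real.rpow_natCast ((p / (p+1)) ^ ((1:ℝ)/4)) 4, ← Real.rpow_mul (by positivity)]
        norm_num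
      have e2 : (2 * Real.sqrt x / Real.sqrt (4*x+1))^(4:ℕ) = 16 * x^2 / (4*x+1)^2 := by
        rw [div_pow, mul_pow]
        rw [show (Real.sqrt x)^(4:ℕ) = (Real.sqrt x * Real.sqrt x)^2 by ring,
          Real.mul_self_sqrt hx.le,
          show (Real.sqrt (4*x+1))^(4:ℕ) = (Real.sqrt (4*x+1) * Real.sqrt (4*x+1))^2 by ring,
          Real.mul_self_sqrt (by linarith)]
        norm_num
      rw [e1, e2]
      rw [div_lt_div_iff₀ (by positivity) (by positivity), hxdef]
      nlinarith [hp]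
    exact lt_of_pow_lt_pow_left₀ 4 hR.le hpow
  linarith [hrle, hlt]
end

section
/- For all real p > 0, L_1(p) < r(p) < U_1(p), where U_1(p) = (p/(p+1))^{1/4} and L_1(p) = sqrt(p/(p+1)) · ((p+2)/(p+1))^{1/4}. -/
/-!
Two properties of Γ drive everything: the recursion `Γ(z + 1) = z Γ(z)` gives
`r p * r (p + 1) = √(p / (p + 1))`, and log-convexity gives `Γ(z + 1/2) ≤ √z Γ(z)`, i.e. `r p ≤ 1`.
Squaring the identity at `p` and `p + 1` shows that `(r p / U₁ p) ^ 4` gets multiplied by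
`(p + 1)³ (p + 3) / (p (p + 2)³) > 1` when `p` increases by 2, while `r ≤ 1` bounds it by `1 + 1/p`.
Along `p, p + 2, p + 4, …` it therefore increases to a limit at most 1, so `r p < U₁ p`.
The lower bound is the upper bound at `p + 1`, divided into the identity.
-/

open Real Filter Topology

theorem Real.Gamma_add_half_le_sqrt_mul_Gamma {z : ℝ} (hz : 0 < z) :
    Gamma (z + 1 / 2) ≤ √z * Gamma z := by
  have hΓ := Gamma_pos_of_pos hz
  have h := Gamma_mul_add_mul_le_rpow_Gamma_mul_rpow_Gamma hz (by positivity : 0 < z + 1)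
    one_half_pos one_half_pos (add_halves 1)
  calc Gamma (z + 1 / 2) = Gamma (1 / 2 * z + 1 / 2 * (z + 1)) := by ring_nf
    _ ≤ Gamma z ^ (1 / 2 : ℝ) * Gamma (z + 1) ^ (1 / 2 : ℝ) := h
    _ = √z * Gamma z := by
      rw [Gamma_add_one hz.ne', mul_rpow hz.le hΓ.le, ← mul_assoc, mul_comm _ (z ^ _), mul_assoc,
        ← rpow_add hΓ, add_halves, rpow_one, sqrt_eq_rpow]

lemma r_pos {p : ℝ} (hp : 0 < p) : 0 < r p := by
  unfold r
  positivity

lemma r_le_one {p : ℝ} (hp : 0 < p) : r p ≤ 1 := by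
  have h := Gamma_add_half_le_sqrt_mul_Gamma (by positivity : 0 < p / 2)
  rw [show p / 2 + 1 / 2 = (p + 1) / 2 by ring] at h
  exact div_le_one_of_le₀ h (by positivity)

lemma r_mul_r_add_one {p : ℝ} (hp : 0 < p) : r p * r (p + 1) = √(p / (p + 1)) := by
  have hs := (sqrt_pos.2 (by positivity : 0 < (p + 1) / 2)).ne'
  have hG : Gamma ((p + 1 + 1) / 2) = p / 2 * Gamma (p / 2) := by
    rw [show (p + 1 + 1) / 2 = p / 2 + 1 by ring, Gamma_add_one (by positivity)]
  have hsplit : √(p / (p + 1)) = √(p / 2) / √((p + 1) / 2) := by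
    rw [← sqrt_div (by positivity)]; congr 1; field_simp
  rw [r, r, hG, hsplit, div_mul_div_comm, div_eq_div_iff (by positivity) hs]
  nth_rw 1 [← mul_self_sqrt (by positivity : 0 ≤ p / 2)]
  ring

lemma r_sq_mul_r_add_one_sq {p : ℝ} (hp : 0 < p) :
    r p ^ 2 * r (p + 1) ^ 2 = p / (p + 1) := by
  rw [← mul_pow, r_mul_r_add_one hp, sq_sqrt (by positivity)]

lemma r_add_two_sq {p : ℝ} (hp : 0 < p) :
    r (p + 2) ^ 2 = r p ^ 2 * ((p + 1) ^ 2 / (p * (p + 2))) := by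
  have h₀ := r_sq_mul_r_add_one_sq hp
  have h₁ := r_sq_mul_r_add_one_sq (by positivity : 0 < p + 1)
  rw [show p + 1 + 1 = p + 2 by ring] at h₁
  have hr := pow_ne_zero 2 (r_pos (by positivity : 0 < p + 1)).ne'
  field_simp at h₀ h₁ ⊢
  refine mul_left_cancel₀ hr ?_
  linear_combination p * h₁ - (p + 1) * h₀

noncomputable def ratioU1 (p : ℝ) : ℝ := r p ^ 4 * ((p + 1) / p)

lemma ratioU1_add_two {p : ℝ} (hp : 0 < p) :
    ratioU1 (p + 2) = ratioU1 p * ((p + 1) ^ 3 * (p + 3) / (p * (p + 2) ^ 3)) := by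
  have h := r_add_two_sq hp
  rw [ratioU1, ratioU1, show r (p + 2) ^ 4 = (r (p + 2) ^ 2) ^ 2 by ring, h]
  field_simp
  ring

lemma ratioU1_lt_ratioU1_add_two {p : ℝ} (hp : 0 < p) : ratioU1 p < ratioU1 (p + 2) := by
  rw [ratioU1_add_two hp]
  refine lt_mul_of_one_lt_right (by unfold ratioU1; have := r_pos hp; positivity) ?_
  rw [one_lt_div (by positivity)]
  nlinarith

lemma ratioU1_le_one_add_inv {p : ℝ} (hp : 0 < p) : ratioU1 p ≤ 1 + p⁻¹ := by
  have h : r p ^ 4 ≤ 1 := pow_le_one₀ (r_pos hp).le (r_le_one hp)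
  calc ratioU1 p ≤ 1 * ((p + 1) / p) := by unfold ratioU1; gcongr
    _ = 1 + p⁻¹ := by field_simp

lemma ratioU1_lt_one {p : ℝ} (hp : 0 < p) : ratioU1 p < 1 := by
  have hmono : ∀ n : ℕ, ratioU1 (p + 2) ≤ ratioU1 (p + 2 + 2 * n) := by
    intro n
    induction n with
    | zero => simp
    | succ n ih =>
      have := ratioU1_lt_ratioU1_add_two (by positivity : 0 < p + 2 + 2 * n)
      rw [Nat.cast_succ, show p + 2 + 2 * ((n : ℝ) + 1) = p + 2 + 2 * n + 2 by ring]
      exact ih.trans this.le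
  have hlim : Tendsto (fun n : ℕ ↦ 1 + (p + 2 + 2 * n)⁻¹) atTop (𝓝 1) := by
    simpa using tendsto_inv_atTop_zero.comp
      (tendsto_atTop_add_const_left _ (p + 2) (tendsto_natCast_atTop_atTop.const_mul_atTop two_pos))
      |>.const_add 1
  have hle : ratioU1 (p + 2) ≤ 1 := ge_of_tendsto' hlim fun n ↦
    (hmono n).trans (ratioU1_le_one_add_inv (p := p + 2 + 2 * n) (by positivity))
  exact (ratioU1_lt_ratioU1_add_two hp).trans_le hle

lemma r_lt_rpow {p : ℝ} (hp : 0 < p) : r p < (p / (p + 1)) ^ ((1 : ℝ) / 4) := by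
  have h := ratioU1_lt_one hp
  rw [ratioU1, ← lt_div_iff₀ (by positivity), one_div_div] at h
  rw [one_div, lt_rpow_inv_iff_of_pos (r_pos hp).le (by positivity) (by norm_num)]
  exact_mod_cast h

theorem L1_lt_r_lt_U1 (p : ℝ) (hp : 0 < p) :
    Real.sqrt (p / (p + 1)) * ((p + 2) / (p + 1)) ^ ((1 : ℝ) / 4) < r p ∧
    r p < (p / (p + 1)) ^ ((1 : ℝ) / 4) := by
  refine ⟨?_, r_lt_rpow hp⟩
  have hB : 0 < ((p + 2) / (p + 1)) ^ ((1 : ℝ) / 4) := by positivity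
  have hnext : r (p + 1) * ((p + 2) / (p + 1)) ^ ((1 : ℝ) / 4) < 1 := by
    have h := r_lt_rpow (by positivity : 0 < p + 1)
    rw [show p + 1 + 1 = p + 2 by ring, ← inv_div, inv_rpow (by positivity)] at h
    exact (lt_inv_mul_iff₀' hB).1 (by rwa [mul_one])
  calc √(p / (p + 1)) * ((p + 2) / (p + 1)) ^ ((1 : ℝ) / 4)
      = r p * (r (p + 1) * ((p + 2) / (p + 1)) ^ ((1 : ℝ) / 4)) := by
        rw [← r_mul_r_add_one hp, mul_assoc]
    _ < r p := mul_lt_of_lt_one_right (r_pos hp) hnext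
end
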